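/- Let Γ be a finite group of order m and let V be a nonzero finite-dimensional complex representation of Γ. Then the space of Γ-invariant vectors in the m-th symmetric power Sym^m V is nonzero. -/

import Mathlib

/-! The symmetrization `∑_σ v_{σ 1} ⊗ ⋯ ⊗ v_{σ m}` of the orbit `(γ v)_{γ ∈ Γ}` of a nonzero vector
`v` is symmetric by construction and `Γ`-invariant because `g` only permutes the orbit. It is
nonzero: a functional `φ` vanishing on no `γ v` exists since `ℂ` is infinite, and `φ^{⊗ m}` sends
the symmetrization to `m! ∏_γ φ (γ v) ≠ 0`. -/

open scoped TensorProduct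

open Equiv

namespace PiTensorProduct

variable (R : Type*) {ι M N : Type*} [Fintype ι] [DecidableEq ι]

section CommSemiring

variable [CommSemiring R] [AddCommMonoid M] [Module R M] [AddCommMonoid N] [Module R N]

noncomputable def symmetrize (f : ι → M) : ⨂[R] _ : ι, M :=
  ∑ σ : Perm ι, tprod R (f ∘ σ)

variable {R}

theorem symmetrize_comp_perm (f : ι → M) (τ : Perm ι) :
    symmetrize R (f ∘ τ) = symmetrize R f :=
  Fintype.sum_equiv (Equiv.mulLeft τ) _ _ fun _ => rfl

theorem reindex_symmetrize (f : ι → M) (π : Perm ι) :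
    reindex R (fun _ => M) π (symmetrize R f) = symmetrize R f := by
  rw [symmetrize, map_sum]
  refine Fintype.sum_equiv (Equiv.mulRight π⁻¹) _ _ fun σ => ?_
  rw [reindex_tprod]
  rfl

theorem map_symmetrize (A : M →ₗ[R] N) (f : ι → M) :
    map (fun _ => A) (symmetrize R f) = symmetrize R (A ∘ f) := by
  simp only [symmetrize, map_sum, map_tprod]
  rfl

theorem lift_symmetrize (φ : Module.Dual R M) (f : ι → M) :
    lift ((MultilinearMap.mkPiAlgebra R ι R).compLinearMap fun _ => φ) (symmetrize R f) =
      Fintype.card (Perm ι) • ∏ i, φ (f i) := by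
  simp only [symmetrize, map_sum, lift.tprod, MultilinearMap.compLinearMap_apply,
    MultilinearMap.mkPiAlgebra_apply, Function.comp_apply]
  rw [← Finset.card_univ, ← Finset.sum_const]
  exact Finset.sum_congr rfl fun σ _ => Equiv.prod_comp σ fun i => φ (f i)

end CommSemiring

theorem symmetrize_ne_zero [CommRing R] [IsDomain R] [CharZero R] [AddCommGroup M] [Module R M]
    {f : ι → M} (φ : Module.Dual R M) (hφ : ∀ i, φ (f i) ≠ 0) : symmetrize R f ≠ 0 := by
  intro h
  have := lift_symmetrize φ f
  rw [h, map_zero, nsmul_eq_mul, eq_comm] at this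
  exact mul_ne_zero (Nat.cast_ne_zero.mpr Fintype.card_ne_zero)
    (Finset.prod_ne_zero_iff.mpr fun i _ => hφ i) this

end PiTensorProduct

open PiTensorProduct in
theorem statement0_general (Γ : Type*) [Group Γ] [Finite Γ]
    (V : Type*) [AddCommGroup V] [Module ℂ V] [Nontrivial V]
    (ρ : Representation ℂ Γ V) :
    ∃ t : ⨂[ℂ] (_ : Fin (Nat.card Γ)), V, t ≠ 0 ∧
      (∀ σ : Equiv.Perm (Fin (Nat.card Γ)),
        PiTensorProduct.reindex ℂ (fun _ : Fin (Nat.card Γ) => V) σ t = t) ∧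
      (∀ g : Γ,
        PiTensorProduct.map (fun _ : Fin (Nat.card Γ) => (ρ g : V →ₗ[ℂ] V)) t = t) := by
  obtain ⟨v, hv⟩ := exists_ne (0 : V)
  let e := Finite.equivFin Γ
  let orbit : Fin (Nat.card Γ) → V := fun i => ρ (e.symm i) v
  have horbit : ∀ i, orbit i ≠ 0 := fun i h => hv <| by
    rw [← ρ.inv_self_apply (e.symm i) v, show ρ (e.symm i) v = 0 from h, map_zero]
  obtain ⟨φ, hφ⟩ := Module.exists_dual_forall_apply_ne_zero (K := ℂ) orbit horbit
  refine ⟨symmetrize ℂ orbit, symmetrize_ne_zero ℂ φ hφ, reindex_symmetrize orbit, fun g => ?_⟩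
  have hg : ρ g ∘ orbit = orbit ∘ (e.symm.trans (Equiv.mulLeft g)).trans e := by
    ext i
    simp [orbit, map_mul]
  rw [map_symmetrize, hg, symmetrize_comp_perm]

/-- If `Γ` is a finite group of order `m` and `V ≠ 0` a finite-dimensional
complex representation of `Γ`, then the space of `Γ`-invariant vectors in `Sym^m V` is
nonzero.  Since we are in characteristic zero, `Sym^m V` is realized as the space of
symmetric tensors inside the `m`-th tensor power of `V`; we assert the existence of a
nonzero symmetric `Γ`-invariant tensor. -/
theorem statement0 (Γ : Type*) [Group Γ] [Finite Γ]
    (V : Type*) [AddCommGroup V] [Module ℂ V] [FiniteDimensional ℂ V] [Nontrivial V]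
    (ρ : Representation ℂ Γ V) :
    ∃ t : ⨂[ℂ] (_ : Fin (Nat.card Γ)), V, t ≠ 0 ∧
      (∀ σ : Equiv.Perm (Fin (Nat.card Γ)),
        PiTensorProduct.reindex ℂ (fun _ : Fin (Nat.card Γ) => V) σ t = t) ∧
      (∀ g : Γ,
        PiTensorProduct.map (fun _ : Fin (Nat.card Γ) => (ρ g : V →ₗ[ℂ] V)) t = t) :=
  statement0_general Γ V ρ
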